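/- arXiv:2604.15752 — 7 statements merged into one kernel-verified Lean document; each statement's English description precedes it below -/
import Mathlib

section
/- Let U ⊆ ℝ^d be open, and let ρ : U → Matrix (Fin n) (Fin n) ℂ and G_μ : U → Matrix (Fin n) (Fin n) ℂ (for μ = 1,…,d) be continuously differentiable families of Hermitian matrices satisfying ∂_μ ρ = G_μ ρ + ρ G_μ on U for every μ. Define the dual curvature F̃_{μν} := ∂_μ G_ν − ∂_ν G_μ − [G_μ, G_ν]. Then at every point of U and for all indices μ, ν one has F̃_{μν} ρ + ρ (F̃_{μν})† = 0, provided ρ is twice continuously differentiable (so that mixed partial derivatives of ρ commute). -/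
/-!
Differentiating `∂_μ ρ = G_μ ρ + ρ G_μ` in direction `ν` and substituting the equation once more
expresses `∂_ν ∂_μ ρ` through `ρ`, `G` and `∂G`. Symmetry of the second derivatives of `ρ` turns
this into an algebraic identity which, because `G_μ`, `G_ν` and their derivatives are Hermitian
(so `[G_μ, G_ν]† = -[G_μ, G_ν]`), says exactly `F̃_{μν} ρ + ρ F̃_{μν}† = 0`.
-/

open Matrix

/-- The partial derivative `∂_μ` of a matrix-valued function on `ℝ^d`, taken entrywise. -/
noncomputable def matPDeriv {d n m : ℕ} (μ : Fin d)
    (f : (Fin d → ℝ) → Matrix (Fin n) (Fin m) ℂ) (x : Fin d → ℝ) :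
    Matrix (Fin n) (Fin m) ℂ :=
  Matrix.of fun i j => fderiv ℝ (fun y => f y i j) x (Pi.single μ 1)

section

variable {d : ℕ}

theorem matPDeriv_congr_of_eventuallyEq {n m : ℕ} (μ : Fin d)
    {f g : (Fin d → ℝ) → Matrix (Fin n) (Fin m) ℂ} {x : Fin d → ℝ} (h : f =ᶠ[nhds x] g) :
    matPDeriv μ f x = matPDeriv μ g x := by
  ext i j
  simp only [matPDeriv, Matrix.of_apply]
  have hij : (fun y => f y i j) =ᶠ[nhds x] fun y => g y i j := h.mono fun y hy => congrFun₂ hy i j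
  rw [hij.fderiv_eq]

theorem matPDeriv_add {n m : ℕ} (μ : Fin d)
    {f g : (Fin d → ℝ) → Matrix (Fin n) (Fin m) ℂ} {x : Fin d → ℝ}
    (hf : ∀ i j, DifferentiableAt ℝ (fun y => f y i j) x)
    (hg : ∀ i j, DifferentiableAt ℝ (fun y => g y i j) x) :
    matPDeriv μ (fun y => f y + g y) x = matPDeriv μ f x + matPDeriv μ g x := by
  ext i j
  simp [matPDeriv, fderiv_fun_add (hf i j) (hg i j)]

theorem differentiableAt_mul_apply {n m p : ℕ}
    {f : (Fin d → ℝ) → Matrix (Fin n) (Fin m) ℂ} {g : (Fin d → ℝ) → Matrix (Fin m) (Fin p) ℂ}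
    {x : Fin d → ℝ}
    (hf : ∀ i j, DifferentiableAt ℝ (fun y => f y i j) x)
    (hg : ∀ i j, DifferentiableAt ℝ (fun y => g y i j) x) (i : Fin n) (j : Fin p) :
    DifferentiableAt ℝ (fun y => (f y * g y) i j) x := by
  simp only [Matrix.mul_apply]
  fun_prop

theorem matPDeriv_mul {n m p : ℕ} (μ : Fin d)
    {f : (Fin d → ℝ) → Matrix (Fin n) (Fin m) ℂ} {g : (Fin d → ℝ) → Matrix (Fin m) (Fin p) ℂ}
    {x : Fin d → ℝ}
    (hf : ∀ i j, DifferentiableAt ℝ (fun y => f y i j) x)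
    (hg : ∀ i j, DifferentiableAt ℝ (fun y => g y i j) x) :
    matPDeriv μ (fun y => f y * g y) x = matPDeriv μ f x * g x + f x * matPDeriv μ g x := by
  ext i j
  simp only [matPDeriv, Matrix.of_apply, Matrix.add_apply, Matrix.mul_apply]
  rw [fderiv_fun_sum (A := fun k y => f y i k * g y k j) fun k _ => (hf i k).mul (hg k j)]
  simp only [_root_.sum_apply, fderiv_fun_mul (hf i _) (hg _ j),
    _root_.add_apply, _root_.smul_apply, smul_eq_mul,
    ← Finset.sum_add_distrib]
  exact Finset.sum_congr rfl fun k _ => by ring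

theorem matPDeriv_mul_add_mul {n : ℕ} (μ : Fin d)
    {f g : (Fin d → ℝ) → Matrix (Fin n) (Fin n) ℂ} {x : Fin d → ℝ}
    (hf : ∀ i j, DifferentiableAt ℝ (fun y => f y i j) x)
    (hg : ∀ i j, DifferentiableAt ℝ (fun y => g y i j) x) :
    matPDeriv μ (fun y => f y * g y + g y * f y) x
      = matPDeriv μ f x * g x + f x * matPDeriv μ g x
        + (matPDeriv μ g x * f x + g x * matPDeriv μ f x) := by
  rw [matPDeriv_add μ (differentiableAt_mul_apply hf hg) (differentiableAt_mul_apply hg hf),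
    matPDeriv_mul μ hf hg, matPDeriv_mul μ hg hf]

theorem matPDeriv_conjTranspose {n m : ℕ} (μ : Fin d)
    (f : (Fin d → ℝ) → Matrix (Fin n) (Fin m) ℂ) (x : Fin d → ℝ) :
    matPDeriv μ (fun y => (f y)ᴴ) x = (matPDeriv μ f x)ᴴ := by
  ext i j
  simp only [matPDeriv, Matrix.of_apply, Matrix.conjTranspose_apply, fderiv_star]
  rfl

theorem isHermitian_matPDeriv {n : ℕ} (μ : Fin d)
    {f : (Fin d → ℝ) → Matrix (Fin n) (Fin n) ℂ} {x : Fin d → ℝ}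
    (hf : ∀ᶠ y in nhds x, (f y).IsHermitian) :
    (matPDeriv μ f x).IsHermitian := by
  rw [Matrix.IsHermitian, ← matPDeriv_conjTranspose]
  exact matPDeriv_congr_of_eventuallyEq μ hf

theorem matPDeriv_matPDeriv_comm {n m : ℕ} (μ ν : Fin d)
    {f : (Fin d → ℝ) → Matrix (Fin n) (Fin m) ℂ} {x : Fin d → ℝ}
    (hf : ∀ i j, ContDiffAt ℝ 2 (fun y => f y i j) x) :
    matPDeriv ν (matPDeriv μ f) x = matPDeriv μ (matPDeriv ν f) x := by
  ext i j
  have hdf : DifferentiableAt ℝ (fderiv ℝ fun y => f y i j) x :=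
    ((hf i j).fderiv_right (m := 1) le_rfl).differentiableAt one_ne_zero
  have hsnd : ∀ v w : Fin d → ℝ, fderiv ℝ (fun y => fderiv ℝ (fun z => f z i j) y v) x w
      = fderiv ℝ (fderiv ℝ fun z => f z i j) x w v := fun v w => by
    simp [fderiv_clm_apply hdf (differentiableAt_const v)]
  simp only [matPDeriv, Matrix.of_apply, hsnd]
  exact (hf i j).isSymmSndFDerivAt (by simp) _ _

end

/-- The algebraic core of the theorem: `a`, `b` stand for `G_μ`, `G_ν`, `da`, `db` for `∂_ν G_μ`,
`∂_μ G_ν`, and `h` is `∂_ν ∂_μ ρ = ∂_μ ∂_ν ρ` after both sides are expanded with the flow equation. -/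
theorem dual_curvature_mul_add_mul_star_eq_zero {R : Type*} [Ring R] [StarRing R]
    {a b da db r : R} (ha : IsSelfAdjoint a) (hb : IsSelfAdjoint b)
    (hda : IsSelfAdjoint da) (hdb : IsSelfAdjoint db)
    (h : da * r + a * (b * r + r * b) + ((b * r + r * b) * a + r * da)
      = db * r + b * (a * r + r * a) + ((a * r + r * a) * b + r * db)) :
    (db - da - (a * b - b * a)) * r + r * star (db - da - (a * b - b * a)) = 0 := by
  simp only [star_sub, star_mul, ha.star_eq, hb.star_eq, hda.star_eq, hdb.star_eq]
  linear_combination (norm := noncomm_ring) -h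

theorem dual_curvature_rho_relation_general {d n : ℕ} (U : Set (Fin d → ℝ)) (hU : IsOpen U)
    (ρ : (Fin d → ℝ) → Matrix (Fin n) (Fin n) ℂ)
    (G : Fin d → (Fin d → ℝ) → Matrix (Fin n) (Fin n) ℂ)
    (hρC2 : ∀ i j, ContDiffOn ℝ 2 (fun x => ρ x i j) U)
    (hGC1 : ∀ μ i j, ContDiffOn ℝ 1 (fun x => G μ x i j) U)
    (hGHerm : ∀ μ, ∀ x ∈ U, (G μ x).IsHermitian)
    (heq : ∀ μ, ∀ x ∈ U, matPDeriv μ ρ x = G μ x * ρ x + ρ x * G μ x) :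
    ∀ x ∈ U, ∀ μ ν : Fin d,
      (matPDeriv μ (G ν) x - matPDeriv ν (G μ) x
          - (G μ x * G ν x - G ν x * G μ x)) * ρ x
        + ρ x * (matPDeriv μ (G ν) x - matPDeriv ν (G μ) x
          - (G μ x * G ν x - G ν x * G μ x))ᴴ = 0 := by
  intro x hx μ ν
  have hUx : U ∈ nhds x := hU.mem_nhds hx
  have hρd : ∀ i j, DifferentiableAt ℝ (fun y => ρ y i j) x := fun i j =>
    ((hρC2 i j).contDiffAt hUx).differentiableAt two_ne_zero
  have hGd : ∀ σ i j, DifferentiableAt ℝ (fun y => G σ y i j) x := fun σ i j =>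
    ((hGC1 σ i j).contDiffAt hUx).differentiableAt one_ne_zero
  have hsecond : ∀ σ τ, matPDeriv τ (matPDeriv σ ρ) x
      = matPDeriv τ (G σ) x * ρ x + G σ x * (G τ x * ρ x + ρ x * G τ x)
        + ((G τ x * ρ x + ρ x * G τ x) * G σ x + ρ x * matPDeriv τ (G σ) x) := fun σ τ => by
    rw [matPDeriv_congr_of_eventuallyEq τ (Filter.eventually_of_mem hUx (heq σ)),
      matPDeriv_mul_add_mul τ (hGd σ) hρd, heq τ x hx]
  have hsymm := matPDeriv_matPDeriv_comm μ ν fun i j => (hρC2 i j).contDiffAt hUx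
  rw [hsecond, hsecond] at hsymm
  have hDG : ∀ σ τ, IsSelfAdjoint (matPDeriv σ (G τ) x) := fun σ τ =>
    (isHermitian_matPDeriv σ (Filter.eventually_of_mem hUx (hGHerm τ))).isSelfAdjoint
  exact dual_curvature_mul_add_mul_star_eq_zero (hGHerm μ x hx).isSelfAdjoint
    (hGHerm ν x hx).isSelfAdjoint (hDG ν μ) (hDG μ ν) hsymm

/-- If `ρ` (twice continuously differentiable) and `G_μ` (continuously
differentiable) are Hermitian families on an open set `U ⊆ ℝ^d` satisfying
`∂_μ ρ = G_μ ρ + ρ G_μ`, then the dual curvature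
`F̃_{μν} = ∂_μ G_ν − ∂_ν G_μ − [G_μ, G_ν]` satisfies `F̃_{μν} ρ + ρ F̃_{μν}† = 0` on `U`. -/
theorem dual_curvature_rho_relation {d n : ℕ} (U : Set (Fin d → ℝ)) (hU : IsOpen U)
    (ρ : (Fin d → ℝ) → Matrix (Fin n) (Fin n) ℂ)
    (G : Fin d → (Fin d → ℝ) → Matrix (Fin n) (Fin n) ℂ)
    (hρC2 : ∀ i j, ContDiffOn ℝ 2 (fun x => ρ x i j) U)
    (hGC1 : ∀ μ i j, ContDiffOn ℝ 1 (fun x => G μ x i j) U)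
    (hρHerm : ∀ x ∈ U, (ρ x).IsHermitian)
    (hGHerm : ∀ μ, ∀ x ∈ U, (G μ x).IsHermitian)
    (heq : ∀ μ, ∀ x ∈ U, matPDeriv μ ρ x = G μ x * ρ x + ρ x * G μ x) :
    ∀ x ∈ U, ∀ μ ν : Fin d,
      (matPDeriv μ (G ν) x - matPDeriv ν (G μ) x
          - (G μ x * G ν x - G ν x * G μ x)) * ρ x
        + ρ x * (matPDeriv μ (G ν) x - matPDeriv ν (G μ) x
          - (G μ x * G ν x - G ν x * G μ x))ᴴ = 0 :=
  dual_curvature_rho_relation_general U hU ρ G hρC2 hGC1 hGHerm heq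
end

section
/- Let λ_1, …, λ_r be positive reals, let φ_1, …, φ_r be an orthonormal family in ℂⁿ, and let W := Σ_{k=1}^r √λ_k φ_k (e_k)† ∈ Matrix (Fin n) (Fin r) ℂ. Suppose F̃₁, F̃₂ ∈ Matrix (Fin n) (Fin n) ℂ and F₁, F₂ ∈ Matrix (Fin r) (Fin r) ℂ satisfy F̃₁ W = W F₁ᵀ and F̃₂ W = W F₂ᵀ. Then tr(F₁ F₂) = Σ_{ℓ,m=1}^r ⟨φ_ℓ, F̃₁ φ_m⟩ ⟨φ_m, F̃₂ φ_ℓ⟩. -/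
/-!
Write `W = Φ D` with `Φ` the isometry whose columns are the `φ_k` and `D = diag(√λ_k)`, which is
invertible. Compressing `F̃ W = W Fᵀ` by `Φ†` gives `Φ† F̃ Φ = D Fᵀ D⁻¹`, so the matrices of the dual
curvatures in the eigenbasis are similar to the transposed ancilla curvatures, by one and the same
similarity. The right-hand side is `tr((Φ† F̃₁ Φ)(Φ† F̃₂ Φ)) = tr(F₁ᵀ F₂ᵀ) = tr(F₁ F₂)`.
-/

open Matrix

namespace Matrix

variable {m k R : Type*} [Fintype m] [CommRing R] [StarRing R]

section Columns

variable (φ : k → m → R)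

theorem conjTranspose_mul_self_of_orthonormal_columns [DecidableEq k]
    (hortho : ∀ a b, star (φ a) ⬝ᵥ φ b = if a = b then (1 : R) else 0) :
    (of φ)ᵀᴴ * (of φ)ᵀ = 1 := by
  ext a b
  exact hortho a b

theorem conjTranspose_mul_mul_apply_eq_dotProduct_mulVec (F : Matrix m m R) (a b : k) :
    ((of φ)ᵀᴴ * F * (of φ)ᵀ) a b = star (φ a) ⬝ᵥ F *ᵥ φ b := by
  simp only [Matrix.mul_apply, dotProduct, mulVec, Finset.mul_sum, Finset.sum_mul, mul_assoc]
  exact Finset.sum_comm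

end Columns

variable [Fintype k] [DecidableEq k]

theorem conjTranspose_mul_mul_eq_conj_of_mul_eq {Φ : Matrix m k R} (hΦ : Φᴴ * Φ = 1)
    {D : Matrix k k R} (hD : IsUnit D) {F : Matrix m m R} {G : Matrix k k R}
    (h : F * (Φ * D) = Φ * D * G) :
    Φᴴ * F * Φ = D * G * D⁻¹ := by
  have hcompress : Φᴴ * F * Φ * D = D * G := by
    rw [Matrix.mul_assoc, Matrix.mul_assoc, h, ← Matrix.mul_assoc, ← Matrix.mul_assoc, hΦ,
      Matrix.one_mul]
  rw [← hcompress, mul_nonsing_inv_cancel_right D _ ((isUnit_iff_isUnit_det D).mp hD)]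

theorem trace_compression_mul_eq_trace_mul {Φ : Matrix m k R} (hΦ : Φᴴ * Φ = 1)
    {D : Matrix k k R} (hD : IsUnit D) {F₁ F₂ : Matrix m m R} {G₁ G₂ : Matrix k k R}
    (h₁ : F₁ * (Φ * D) = Φ * D * G₁) (h₂ : F₂ * (Φ * D) = Φ * D * G₂) :
    trace (Φᴴ * F₁ * Φ * (Φᴴ * F₂ * Φ)) = trace (G₁ * G₂) := by
  rw [conjTranspose_mul_mul_eq_conj_of_mul_eq hΦ hD h₁,
    conjTranspose_mul_mul_eq_conj_of_mul_eq hΦ hD h₂, ← trace_conj hD (G₁ * G₂)]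
  simp only [Matrix.mul_assoc, nonsing_inv_mul_cancel_left D _ ((isUnit_iff_isUnit_det D).mp hD)]

end Matrix

/-- Let `W = Σ_k √λ_k |φ_k⟩⟨e_k|` be the purification amplitude of
`ρ = Σ_k λ_k |φ_k⟩⟨φ_k|` in the eigenbasis gauge (`λ_k > 0`, `φ_k` orthonormal in `ℂⁿ`).
If `F̃₁ W = W F₁ᵀ` and `F̃₂ W = W F₂ᵀ`, then
`tr(F₁ F₂) = Σ_{ℓ,m} ⟨φ_ℓ, F̃₁ φ_m⟩ ⟨φ_m, F̃₂ φ_ℓ⟩`. -/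
theorem trace_curvature_product {n r : ℕ}
    (lam : Fin r → ℝ) (hlam : ∀ k, 0 < lam k)
    (φ : Fin r → (Fin n → ℂ))
    (hortho : ∀ k l, star (φ k) ⬝ᵥ φ l = if k = l then (1 : ℂ) else 0)
    (F'₁ F'₂ : Matrix (Fin n) (Fin n) ℂ) (F₁ F₂ : Matrix (Fin r) (Fin r) ℂ)
    (hFW₁ : F'₁ * (Matrix.of fun i k => (Real.sqrt (lam k) : ℂ) * φ k i)
          = (Matrix.of fun i k => (Real.sqrt (lam k) : ℂ) * φ k i) * F₁ᵀ)
    (hFW₂ : F'₂ * (Matrix.of fun i k => (Real.sqrt (lam k) : ℂ) * φ k i)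
          = (Matrix.of fun i k => (Real.sqrt (lam k) : ℂ) * φ k i) * F₂ᵀ) :
    Matrix.trace (F₁ * F₂)
      = ∑ ℓ : Fin r, ∑ m : Fin r,
          (star (φ ℓ) ⬝ᵥ F'₁.mulVec (φ m)) * (star (φ m) ⬝ᵥ F'₂.mulVec (φ ℓ)) := by
  set D := diagonal fun k => (Real.sqrt (lam k) : ℂ)
  have hW : (Matrix.of fun i k => (Real.sqrt (lam k) : ℂ) * φ k i) = (of φ)ᵀ * D := by
    ext i k
    simp [D, mul_comm]
  have hD : IsUnit D := isUnit_diagonal.mpr <| Pi.isUnit_iff.mpr fun k =>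
    isUnit_iff_ne_zero.mpr <| Complex.ofReal_ne_zero.mpr (Real.sqrt_ne_zero'.mpr (hlam k))
  rw [hW] at hFW₁ hFW₂
  calc trace (F₁ * F₂) = trace (F₁ᵀ * F₂ᵀ) := (trace_transpose_mul F₁ F₂).symm
    _ = trace ((of φ)ᵀᴴ * F'₁ * (of φ)ᵀ * ((of φ)ᵀᴴ * F'₂ * (of φ)ᵀ)) :=
      (trace_compression_mul_eq_trace_mul
        (conjTranspose_mul_self_of_orthonormal_columns φ hortho) hD hFW₁ hFW₂).symm
    _ = _ := by simp only [← conjTranspose_mul_mul_apply_eq_dotProduct_mulVec]; rfl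
end

section
/- Let ρ ∈ Matrix (Fin n) (Fin n) ℂ, and let φ_ℓ, φ_m be eigenvectors of ρ with eigenvalues λ_ℓ > 0 and λ_m > 0 respectively. Let H ∈ Matrix (Fin n) (Fin n) ℂ be Hermitian and K ∈ Matrix (Fin n) (Fin n) ℂ be anti-Hermitian, and set F̃ := H − K. Suppose F̃ ρ + ρ F̃† = 0. Then ⟨φ_m, H φ_ℓ⟩ = ((λ_ℓ − λ_m)/(λ_ℓ + λ_m)) ⟨φ_m, K φ_ℓ⟩, and consequently ⟨φ_m, F̃ φ_ℓ⟩ = −(2λ_m/(λ_ℓ + λ_m)) ⟨φ_m, K φ_ℓ⟩. -/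
/-!
Sandwiching `F̃ ρ + ρ F̃† = 0` between `φ_m†` and `φ_ℓ`, and using that `φ_m†` is a left
eigenvector of the Hermitian `ρ`, gives `λ_ℓ ⟨H − K⟩ + λ_m ⟨H + K⟩ = 0` since `F̃† = H + K`.
Solving this linear relation for `⟨H⟩` (possible as `λ_ℓ + λ_m > 0`) gives both formulas.
-/

open Matrix

theorem Matrix.IsHermitian.star_vecMul_eq_of_mulVec_eq {𝕜 : Type*} [RCLike 𝕜] {ι : Type*}
    [Fintype ι] {A : Matrix ι ι 𝕜} (hA : A.IsHermitian) {v : ι → 𝕜} {r : ℝ}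
    (hv : A *ᵥ v = (r : 𝕜) • v) : star v ᵥ* A = (r : 𝕜) • star v := by
  rw [← hA.eq, ← star_mulVec, hv, star_smul, RCLike.star_def, RCLike.conj_ofReal]

theorem Matrix.dotProduct_mul_add_mul_mulVec_of_eigen {R : Type*} [CommSemiring R] {ι : Type*}
    [Fintype ι] {ρ : Matrix ι ι R} (A B : Matrix ι ι R) {u w : ι → R} {a b : R}
    (hu : ρ *ᵥ u = a • u) (hw : w ᵥ* ρ = b • w) :
    w ⬝ᵥ (A * ρ + ρ * B) *ᵥ u = a * (w ⬝ᵥ A *ᵥ u) + b * (w ⬝ᵥ B *ᵥ u) := by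
  rw [add_mulVec, dotProduct_add, ← mulVec_mulVec, ← mulVec_mulVec, hu, mulVec_smul,
    dotProduct_smul, dotProduct_mulVec w ρ, hw, smul_dotProduct, smul_eq_mul, smul_eq_mul]

theorem dual_curvature_matrix_element_formula_general {n : ℕ}
    (ρ : Matrix (Fin n) (Fin n) ℂ) (hρ : ρ.IsHermitian)
    (φℓ φm : Fin n → ℂ) (lamℓ lamm : ℝ)
    (hlamℓ : 0 < lamℓ) (hlamm : 0 < lamm)
    (heigℓ : ρ.mulVec φℓ = (lamℓ : ℂ) • φℓ)
    (heigm : ρ.mulVec φm = (lamm : ℂ) • φm)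
    (H K : Matrix (Fin n) (Fin n) ℂ)
    (hH : H.IsHermitian) (hK : Kᴴ = -K)
    (hrel : (H - K) * ρ + ρ * (H - K)ᴴ = 0) :
    star φm ⬝ᵥ H.mulVec φℓ
        = (((lamℓ - lamm) / (lamℓ + lamm) : ℝ) : ℂ) * (star φm ⬝ᵥ K.mulVec φℓ)
    ∧ star φm ⬝ᵥ (H - K).mulVec φℓ
        = -(((2 * lamm) / (lamℓ + lamm) : ℝ) : ℂ) * (star φm ⬝ᵥ K.mulVec φℓ) := by
  set h := star φm ⬝ᵥ H *ᵥ φℓ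
  set k := star φm ⬝ᵥ K *ᵥ φℓ
  have hadj : (H - K)ᴴ = H + K := by rw [conjTranspose_sub, hH.eq, hK, sub_neg_eq_add]
  have key : ((lamℓ : ℂ) + lamm) * h = ((lamℓ : ℂ) - lamm) * k := by
    have hsandwich := dotProduct_mul_add_mul_mulVec_of_eigen (H - K) (H - K)ᴴ heigℓ
      (hρ.star_vecMul_eq_of_mulVec_eq heigm)
    rw [hrel, zero_mulVec, dotProduct_zero, hadj, sub_mulVec, add_mulVec, dotProduct_sub,
      dotProduct_add] at hsandwich
    linear_combination -hsandwich
  have hsum : ((lamℓ : ℂ) + lamm) ≠ 0 := by exact_mod_cast (add_pos hlamℓ hlamm).ne'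
  rw [sub_mulVec, dotProduct_sub]
  push_cast
  constructor <;> field_simp <;> linear_combination key

/-- Let `ρ` be Hermitian with eigenvectors `φ_ℓ, φ_m` for positive eigenvalues
`λ_ℓ, λ_m`, let `H` be Hermitian, `K` anti-Hermitian, and `F̃ := H − K`. If
`F̃ ρ + ρ F̃† = 0`, then `⟨φ_m, H φ_ℓ⟩ = ((λ_ℓ − λ_m)/(λ_ℓ + λ_m)) ⟨φ_m, K φ_ℓ⟩` and
consequently `⟨φ_m, F̃ φ_ℓ⟩ = −(2λ_m/(λ_ℓ + λ_m)) ⟨φ_m, K φ_ℓ⟩`. -/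
theorem dual_curvature_matrix_element_formula {n : ℕ}
    (ρ : Matrix (Fin n) (Fin n) ℂ) (hρ : ρ.IsHermitian)
    (φℓ φm : Fin n → ℂ) (lamℓ lamm : ℝ)
    (hφℓ : φℓ ≠ 0) (hφm : φm ≠ 0)
    (hlamℓ : 0 < lamℓ) (hlamm : 0 < lamm)
    (heigℓ : ρ.mulVec φℓ = (lamℓ : ℂ) • φℓ)
    (heigm : ρ.mulVec φm = (lamm : ℂ) • φm)
    (H K : Matrix (Fin n) (Fin n) ℂ)
    (hH : H.IsHermitian) (hK : Kᴴ = -K)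
    (hrel : (H - K) * ρ + ρ * (H - K)ᴴ = 0) :
    star φm ⬝ᵥ H.mulVec φℓ
        = (((lamℓ - lamm) / (lamℓ + lamm) : ℝ) : ℂ) * (star φm ⬝ᵥ K.mulVec φℓ)
    ∧ star φm ⬝ᵥ (H - K).mulVec φℓ
        = -(((2 * lamm) / (lamℓ + lamm) : ℝ) : ℂ) * (star φm ⬝ᵥ K.mulVec φℓ) :=
  dual_curvature_matrix_element_formula_general ρ hρ φℓ φm lamℓ lamm hlamℓ hlamm heigℓ heigm H K hH
    hK hrel
end

section
/- Let d, r be positive integers, let g ∈ Matrix (Fin d) (Fin d) ℝ be symmetric positive definite with inverse entries g^{μν}, and for each pair (μ,ν) let F_{μν} ∈ Matrix (Fin r) (Fin r) ℂ be anti-Hermitian matrices satisfying F_{νμ} = −F_{μν}. Then 𝒞 := −(1/4) Σ_{μ,ν,α,β=1}^d g^{μα} g^{νβ} tr(F_{μν} F_{αβ}) is a nonnegative real number, and 𝒞 = 0 if and only if F_{μν} = 0 for all μ, ν. -/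
/-!
Anti-Hermitian `A` turns `tr(A B)` into `-⟨A, B⟩` for the Frobenius inner product, so, reading the
entries `(F_{μν})_{ij}` for fixed `(i, j)` as a vector `v_{ij}` indexed by `(μ, ν)`,
`𝒞 = (1/4) Σ_{ij} v_{ij}^* (g⁻¹ ⊗ g⁻¹) v_{ij}`. The Kronecker square of the positive definite
matrix `g⁻¹` is positive definite, so every summand is nonnegative, and vanishes only if `v_{ij} = 0`.
-/

open Matrix

/-- The scalar curvature measure `𝒞 = −(1/4) Σ g^{μα} g^{νβ} tr(F_{μν} F_{αβ})`, with indices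
raised by the inverse of the metric `g`. -/
noncomputable def curvMeasure {d r : ℕ} (g : Matrix (Fin d) (Fin d) ℝ)
    (F : Fin d → Fin d → Matrix (Fin r) (Fin r) ℂ) : ℂ :=
  -(1/4 : ℂ) * ∑ μ : Fin d, ∑ ν : Fin d, ∑ α : Fin d, ∑ β : Fin d,
    ((g⁻¹ μ α : ℝ) : ℂ) * ((g⁻¹ ν β : ℝ) : ℂ) * Matrix.trace (F μ ν * F α β)

open scoped ComplexOrder Kronecker

namespace Matrix

variable {n ι 𝕜 R : Type*} [Fintype n] [Fintype ι] [RCLike 𝕜] [CommRing R] [StarRing R]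

theorem PosDef.map_algebraMap {A : Matrix n n ℝ} (hA : A.PosDef) :
    (A.map (algebraMap ℝ 𝕜)).PosDef := by
  classical
  open scoped MatrixOrder in
  obtain ⟨B, rfl⟩ := CStarAlgebra.nonneg_iff_eq_star_mul_self.mp hA.posSemidef.nonneg
  have hsemidef : ((star B * B).map (algebraMap ℝ 𝕜)).PosSemidef := by
    rw [star_eq_conjTranspose, Matrix.map_mul,
      conjTranspose_map _ fun x => (RCLike.conj_ofReal x).symm]
    exact posSemidef_conjTranspose_mul_self _
  exact hsemidef.posDef_iff_isUnit.mpr (hA.isUnit.map (algebraMap ℝ 𝕜).mapMatrix)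

theorem PosSemidef.sum_dotProduct_mulVec_nonneg {K : Matrix n n 𝕜} (hK : K.PosSemidef)
    (v : ι → n → 𝕜) : 0 ≤ ∑ k, star (v k) ⬝ᵥ (K *ᵥ v k) :=
  Finset.sum_nonneg fun k _ => hK.dotProduct_mulVec_nonneg (v k)

theorem PosDef.sum_dotProduct_mulVec_eq_zero_iff {K : Matrix n n 𝕜} (hK : K.PosDef)
    (v : ι → n → 𝕜) : ∑ k, star (v k) ⬝ᵥ (K *ᵥ v k) = 0 ↔ ∀ k, v k = 0 := by
  rw [Finset.sum_eq_zero_iff_of_nonneg fun k _ => hK.posSemidef.dotProduct_mulVec_nonneg (v k)]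
  refine forall_congr' fun k => ⟨fun h => ?_, fun h => by simp [h]⟩
  by_contra hk
  exact (hK.dotProduct_mulVec_pos hk).ne' (h (Finset.mem_univ k))

theorem trace_mul_of_conjTranspose_eq_neg {A B : Matrix n n R} (hA : Aᴴ = -A) :
    trace (A * B) = -∑ i, ∑ j, star (A i j) * B i j := by
  calc trace (A * B) = -trace (Aᴴ * B) := by rw [hA, neg_mul, trace_neg, neg_neg]
    _ = -∑ i, ∑ j, star (A i j) * B i j := by
      simp only [trace, diag, mul_apply, conjTranspose_apply]
      rw [Finset.sum_comm]

theorem sum_mul_trace_mul_of_conjTranspose_eq_neg {m : Type*} [Fintype m] (K : Matrix ι ι R)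
    {A : ι → Matrix m m R} (hA : ∀ p, (A p)ᴴ = -A p) :
    ∑ p, ∑ q, K p q * trace (A p * A q)
      = -∑ e : m × m, star (fun p => A p e.1 e.2) ⬝ᵥ (K *ᵥ fun p => A p e.1 e.2) := by
  simp only [trace_mul_of_conjTranspose_eq_neg (hA _), dotProduct, mulVec, Pi.star_apply,
    ← Fintype.sum_prod_type', Finset.mul_sum, mul_neg, Finset.sum_neg_distrib, neg_inj]
  -- both sides are now single sums, indexed by `(p, q, (i, j))` and `((i, j), p, q)`
  exact Fintype.sum_equiv ((Equiv.prodAssoc ι ι (m × m)).symm.trans (Equiv.prodComm _ _)) _ _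
    fun _ => mul_left_comm _ _ _

end Matrix

section curvMeasure

variable {d r : ℕ} {g : Matrix (Fin d) (Fin d) ℝ} {F : Fin d → Fin d → Matrix (Fin r) (Fin r) ℂ}

theorem curvMeasure_eq_sum_dotProduct_mulVec (hF : ∀ μ ν, (F μ ν)ᴴ = -F μ ν) :
    curvMeasure g F = (1 / 4 : ℂ) * ∑ e : Fin r × Fin r,
      star (fun p : Fin d × Fin d => F p.1 p.2 e.1 e.2) ⬝ᵥ
        (((g⁻¹).map (algebraMap ℝ ℂ) ⊗ₖ (g⁻¹).map (algebraMap ℝ ℂ)) *ᵥ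
          fun p => F p.1 p.2 e.1 e.2) := by
  have key := sum_mul_trace_mul_of_conjTranspose_eq_neg
    ((g⁻¹).map (algebraMap ℝ ℂ) ⊗ₖ (g⁻¹).map (algebraMap ℝ ℂ)) fun p => hF p.1 p.2
  conv at key => lhs; simp only [Fintype.sum_prod_type, kroneckerMap_apply, map_apply,
    Complex.coe_algebraMap]
  rw [curvMeasure, key]
  ring

theorem curvMeasure_nonneg (hg : g.PosDef) (hF : ∀ μ ν, (F μ ν)ᴴ = -F μ ν) :
    0 ≤ curvMeasure g F := by
  have hG := (hg.inv.map_algebraMap (𝕜 := ℂ)).kronecker (hg.inv.map_algebraMap (𝕜 := ℂ))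
  rw [curvMeasure_eq_sum_dotProduct_mulVec hF]
  exact mul_nonneg (by positivity) (hG.posSemidef.sum_dotProduct_mulVec_nonneg _)

theorem curvMeasure_eq_zero_iff (hg : g.PosDef) (hF : ∀ μ ν, (F μ ν)ᴴ = -F μ ν) :
    curvMeasure g F = 0 ↔ ∀ μ ν, F μ ν = 0 := by
  have hG := (hg.inv.map_algebraMap (𝕜 := ℂ)).kronecker (hg.inv.map_algebraMap (𝕜 := ℂ))
  rw [curvMeasure_eq_sum_dotProduct_mulVec hF, mul_eq_zero, or_iff_right (by norm_num),
    hG.sum_dotProduct_mulVec_eq_zero_iff]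
  simp only [funext_iff, Prod.forall, Pi.zero_apply]
  exact ⟨fun h μ ν => ext fun i j => h i j μ ν, fun h i j μ ν => by simp [h]⟩

end curvMeasure

theorem curvMeasure_nonneg_and_zero_iff_general {d r : ℕ}
    (g : Matrix (Fin d) (Fin d) ℝ) (hgpos : g.PosDef)
    (F : Fin d → Fin d → Matrix (Fin r) (Fin r) ℂ)
    (hFanti : ∀ μ ν, (F μ ν)ᴴ = -(F μ ν)) :
    (curvMeasure g F).im = 0 ∧ 0 ≤ (curvMeasure g F).re ∧
      (curvMeasure g F = 0 ↔ ∀ μ ν, F μ ν = 0) := by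
  obtain ⟨hre, him⟩ := Complex.nonneg_iff.mp (curvMeasure_nonneg hgpos hFanti)
  exact ⟨him.symm, hre, curvMeasure_eq_zero_iff hgpos hFanti⟩

/-- For a symmetric positive definite metric `g` and anti-Hermitian curvature
components `F_{μν}` that are antisymmetric in the indices, the scalar curvature measure
`𝒞 = −(1/4) Σ g^{μα} g^{νβ} tr(F_{μν} F_{αβ})` is a nonnegative real number, and it vanishes
if and only if all `F_{μν}` vanish. -/
theorem curvMeasure_nonneg_and_zero_iff {d r : ℕ} (hd : 0 < d) (hr : 0 < r)
    (g : Matrix (Fin d) (Fin d) ℝ) (hgsymm : g.IsSymm) (hgpos : g.PosDef)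
    (F : Fin d → Fin d → Matrix (Fin r) (Fin r) ℂ)
    (hFanti : ∀ μ ν, (F μ ν)ᴴ = -(F μ ν))
    (hFskew : ∀ μ ν, F ν μ = -(F μ ν)) :
    (curvMeasure g F).im = 0 ∧ 0 ≤ (curvMeasure g F).re ∧
      (curvMeasure g F = 0 ↔ ∀ μ ν, F μ ν = 0) :=
  curvMeasure_nonneg_and_zero_iff_general g hgpos F hFanti
end

section
/- Let ρ = Σ_{ℓ=1}^r λ_ℓ |φ_ℓ⟩⟨φ_ℓ| with λ_ℓ > 0 and φ_1,…,φ_r an orthonormal family in ℂⁿ, let G_1,…,G_d ∈ Matrix (Fin n) (Fin n) ℂ be Hermitian, and let g ∈ Matrix (Fin d) (Fin d) ℝ be symmetric positive definite with inverse entries g^{μν}. Define the curvature measure 𝒞 := − Σ_{μ,ν,α,β=1}^d g^{μα} g^{νβ} Σ_{ℓ,m=1}^r (λ_ℓ λ_m/(λ_ℓ + λ_m)²) ⟨φ_ℓ, [G_μ, G_ν] φ_m⟩ ⟨φ_m, [G_α, G_β] φ_ℓ⟩, and set L_μ := 2 G_μ. Then 𝒞 = 0 if and only if ⟨ψ, [L_μ,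 L_ν] ψ⟩ = 0 for every ψ in the span of {φ_1, …, φ_r} and every pair μ, ν. -/
/-!
Put `C = g⁻¹` (complexified) and `A^{ℓm}_{μν} = ⟨φ_ℓ, [G_μ, G_ν] φ_m⟩`. The commutators of
Hermitian matrices are skew-Hermitian, so `⟨φ_m, [G_α, G_β] φ_ℓ⟩ = -conj A^{ℓm}_{αβ}` and
`𝒞 = Σ_{ℓ,m} w_{ℓm} ⟨A^{ℓm}, (Cᵀ ⊗ Cᵀ) A^{ℓm}⟩` with weights `w_{ℓm} = λ_ℓ λ_m / (λ_ℓ + λ_m)² > 0`.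
The Kronecker product of positive definite matrices is positive definite, so `𝒞 = 0` iff every
`A^{ℓm}` vanishes, i.e. iff all matrix elements of every `[G_μ, G_ν]` between the `φ`'s vanish;
by polarization this is the vanishing of `⟨ψ, [G_μ, G_ν] ψ⟩` on `span φ`.
-/

open Matrix ComplexOrder Function
open scoped Kronecker

namespace Matrix

variable {ι κ : Type*} [Fintype ι] [Fintype κ]

lemma IsHermitian.conjTranspose_commutator {A B : Matrix ι ι ℂ} (hA : A.IsHermitian)
    (hB : B.IsHermitian) : (A * B - B * A)ᴴ = -(A * B - B * A) := by
  rw [conjTranspose_sub, conjTranspose_mul, conjTranspose_mul, hA.eq, hB.eq, neg_sub]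

lemma star_dotProduct_mulVec_eq_neg_star_of_skew {K : Matrix ι ι ℂ} (hK : Kᴴ = -K)
    (u v : ι → ℂ) : star v ⬝ᵥ K *ᵥ u = -star (star u ⬝ᵥ K *ᵥ v) := by
  rw [← star_dotProduct, star_mulVec, dotProduct_mulVec, hK, vecMul_neg, neg_dotProduct,
    neg_neg]

lemma star_dotProduct_mulVec_eq_zero_of_polarization (M : Matrix ι ι ℂ) {u v : ι → ℂ}
    (h : ∀ a b : ℂ, star (a • u + b • v) ⬝ᵥ M *ᵥ (a • u + b • v) = 0) :
    star u ⬝ᵥ M *ᵥ v = 0 := by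
  have h₁₀ := h 1 0
  have h₀₁ := h 0 1
  have h₁₁ := h 1 1
  have h₁ᵢ := h 1 Complex.I
  simp only [star_add, star_smul, add_dotProduct, mulVec_add, mulVec_smul, dotProduct_add,
    dotProduct_smul, smul_dotProduct, smul_eq_mul, one_smul, zero_smul, zero_add, add_zero,
    RCLike.star_def, Complex.conj_I] at h₁₀ h₀₁ h₁₁ h₁ᵢ
  linear_combination h₁₁ / 2 - Complex.I / 2 * h₁ᵢ + (Complex.I / 2 - 1 / 2) * h₁₀
    + (Complex.I / 2 - 1 / 2) * h₀₁ + (star u ⬝ᵥ M *ᵥ v - star v ⬝ᵥ M *ᵥ u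
      - Complex.I * star v ⬝ᵥ M *ᵥ v) / 2 * Complex.I_sq

lemma forall_mem_span_star_dotProduct_mulVec_self_eq_zero_iff (M : Matrix ι ι ℂ)
    (v : κ → ι → ℂ) :
    (∀ ψ ∈ Submodule.span ℂ (Set.range v), star ψ ⬝ᵥ M *ᵥ ψ = 0) ↔
      ∀ k l, star (v k) ⬝ᵥ M *ᵥ v l = 0 := by
  refine ⟨fun h k l => M.star_dotProduct_mulVec_eq_zero_of_polarization fun a b => h _ ?_,
    fun h ψ hψ => ?_⟩
  · exact add_mem (Submodule.smul_mem _ a (Submodule.subset_span ⟨k, rfl⟩))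
      (Submodule.smul_mem _ b (Submodule.subset_span ⟨l, rfl⟩))
  · obtain ⟨c, rfl⟩ := (Submodule.mem_span_range_iff_exists_fun ℂ).mp hψ
    simp [star_sum, sum_dotProduct, mulVec_sum, dotProduct_sum, mulVec_smul, h]

open scoped MatrixOrder in
lemma PosDef.map_ofReal [DecidableEq ι] {M : Matrix ι ι ℝ} (hM : M.PosDef) :
    (M.map ((↑) : ℝ → ℂ)).PosDef := by
  set S := CFC.sqrt M
  have hSS : S * S = M := CFC.sqrt_mul_sqrt_self M hM.posSemidef.nonneg
  have hSH : S.IsHermitian := (nonneg_iff_posSemidef.mp (CFC.sqrt_nonneg M)).isHermitian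
  have hS : IsUnit (S.map ((↑) : ℝ → ℂ)) :=
    (isUnit_of_mul_isUnit_right (hSS ▸ hM.isUnit)).map Complex.ofRealHom.mapMatrix
  have hmap : M.map ((↑) : ℝ → ℂ) = (S.map (↑))ᴴ * S.map (↑) := by
    ext i j
    simp only [← hSS, map_apply, mul_apply, conjTranspose_apply, Complex.ofReal_sum,
      Complex.ofReal_mul, RCLike.star_def, Complex.conj_ofReal, ← hSH.apply i, star_trivial]
  rw [hmap]
  exact PosDef.conjTranspose_mul_self _ (mulVec_injective_iff_isUnit.mpr hS)

lemma PosDef.sum_mul_star_dotProduct_mulVec_eq_zero_iff {M : Matrix ι ι ℂ} (hM : M.PosDef)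
    {w : κ → ℂ} (hw : ∀ k, 0 < w k) (x : κ → ι → ℂ) :
    ∑ k, w k * (star (x k) ⬝ᵥ M *ᵥ x k) = 0 ↔ ∀ k, x k = 0 := by
  have hpos (k : κ) (hk : x k ≠ 0) : 0 < w k * (star (x k) ⬝ᵥ M *ᵥ x k) :=
    mul_pos (hw k) (hM.dotProduct_mulVec_pos hk)
  rw [Fintype.sum_eq_zero_iff_of_nonneg fun k => ?_, funext_iff]
  · refine forall_congr' fun k => ⟨fun h => ?_, fun h => by simp [h]⟩
    by_contra hk
    exact (hpos k hk).ne' h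
  · by_cases hk : x k = 0
    · simp [hk]
    · exact (hpos k hk).le

lemma sum_mul_mul_star_eq_star_dotProduct_kronecker (C : Matrix ι ι ℂ) (a : ι → ι → ℂ) :
    ∑ μ, ∑ ν, ∑ α, ∑ β, C μ α * C ν β * (a μ ν * star (a α β)) =
      star (uncurry a) ⬝ᵥ (Cᵀ ⊗ₖ Cᵀ) *ᵥ uncurry a := by
  simp only [dotProduct, mulVec, Fintype.sum_prod_type, kroneckerMap_apply, transpose_apply,
    Pi.star_apply, uncurry_apply_pair, Finset.mul_sum]
  rw [Finset.sum_comm_cycle]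
  refine Finset.sum_congr rfl fun α _ => ?_
  rw [Finset.sum_comm_cycle]
  exact Finset.sum_congr rfl fun β _ => Finset.sum_congr rfl fun μ _ =>
    Finset.sum_congr rfl fun ν _ => by ring

lemma neg_sum_mul_sum_eq_sum_star_dotProduct_kronecker (C : Matrix ι ι ℂ) (w : κ → κ → ℂ)
    (a b : κ → κ → ι → ι → ℂ) (hb : ∀ ℓ m α β, b ℓ m α β = -star (a ℓ m α β)) :
    -∑ μ, ∑ ν, ∑ α, ∑ β, C μ α * C ν β * ∑ ℓ, ∑ m, w ℓ m * a ℓ m μ ν * b ℓ m α β =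
      ∑ p : κ × κ, w p.1 p.2 *
        (star (uncurry (a p.1 p.2)) ⬝ᵥ (Cᵀ ⊗ₖ Cᵀ) *ᵥ uncurry (a p.1 p.2)) := by
  simp only [← sum_mul_mul_star_eq_star_dotProduct_kronecker, Fintype.sum_prod_type, hb,
    Finset.mul_sum, ← Finset.sum_neg_distrib]
  simp only [Finset.sum_comm (γ := ι) (α := κ)]
  simp only [mul_neg, neg_neg, mul_assoc, mul_left_comm _ (w _ _)]

end Matrix

theorem curvMeasure_zero_iff_PCC_general {d n r : ℕ}
    (lam : Fin r → ℝ) (hlam : ∀ ℓ, 0 < lam ℓ)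
    (φ : Fin r → (Fin n → ℂ))
    (G : Fin d → Matrix (Fin n) (Fin n) ℂ) (hG : ∀ μ, (G μ).IsHermitian)
    (g : Matrix (Fin d) (Fin d) ℝ) (hgpos : g.PosDef)
    (L : Fin d → Matrix (Fin n) (Fin n) ℂ) (hL : ∀ μ, L μ = (2 : ℂ) • G μ) :
    (-∑ μ : Fin d, ∑ ν : Fin d, ∑ α : Fin d, ∑ β : Fin d,
        ((g⁻¹ μ α : ℝ) : ℂ) * ((g⁻¹ ν β : ℝ) : ℂ) *
          ∑ ℓ : Fin r, ∑ m : Fin r,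
            ((lam ℓ * lam m / (lam ℓ + lam m) ^ 2 : ℝ) : ℂ) *
              (star (φ ℓ) ⬝ᵥ (G μ * G ν - G ν * G μ).mulVec (φ m)) *
              (star (φ m) ⬝ᵥ (G α * G β - G β * G α).mulVec (φ ℓ)) = 0)
    ↔ ∀ ψ ∈ Submodule.span ℂ (Set.range φ), ∀ μ ν : Fin d,
        star ψ ⬝ᵥ (L μ * L ν - L ν * L μ).mulVec ψ = 0 := by
  set C := (g⁻¹).map ((↑) : ℝ → ℂ)
  have hC : (Cᵀ ⊗ₖ Cᵀ).PosDef :=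
    hgpos.inv.map_ofReal.transpose.kronecker hgpos.inv.map_ofReal.transpose
  have hw (p : Fin r × Fin r) : 0 < ((lam p.1 * lam p.2 / (lam p.1 + lam p.2) ^ 2 : ℝ) : ℂ) :=
    Complex.zero_lt_real.mpr <|
      div_pos (mul_pos (hlam _) (hlam _)) (pow_pos (add_pos (hlam _) (hlam _)) 2)
  have hcurv := neg_sum_mul_sum_eq_sum_star_dotProduct_kronecker C
    (fun ℓ m => ((lam ℓ * lam m / (lam ℓ + lam m) ^ 2 : ℝ) : ℂ))
    (fun ℓ m μ ν => star (φ ℓ) ⬝ᵥ (G μ * G ν - G ν * G μ) *ᵥ φ m)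
    (fun ℓ m α β => star (φ m) ⬝ᵥ (G α * G β - G β * G α) *ᵥ φ ℓ)
    fun ℓ m α β => star_dotProduct_mulVec_eq_neg_star_of_skew
      ((hG α).conjTranspose_commutator (hG β)) _ _
  simp only [C, map_apply] at hcurv
  have hLL (μ ν : Fin d) : L μ * L ν - L ν * L μ = (4 : ℂ) • (G μ * G ν - G ν * G μ) := by
    rw [hL, hL, smul_mul_smul, smul_mul_smul, ← smul_sub]
    norm_num
  rw [hcurv, hC.sum_mul_star_dotProduct_mulVec_eq_zero_iff hw]
  simp only [hLL, smul_mulVec, dotProduct_smul, smul_eq_mul, mul_eq_zero, four_ne_zero, false_or]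
  rw [forall₂_comm]
  simp only [forall_mem_span_star_dotProduct_mulVec_self_eq_zero_iff, funext_iff, Prod.forall,
    uncurry_apply_pair, Pi.zero_apply]
  exact ⟨fun h μ ν k l => h k l μ ν, fun h k l μ ν => h μ ν k l⟩

/-- Theorem 2 of the paper. For a rank-`r` density matrix
`ρ = Σ_ℓ λ_ℓ |φ_ℓ⟩⟨φ_ℓ|` (`λ_ℓ > 0`, `φ_ℓ` orthonormal), Hermitian `G_μ` with SLDs
`L_μ = 2 G_μ`, and a symmetric positive definite Bures metric `g`, the spectral-decomposition
curvature measure `𝒞` vanishes if and only if the partial commutativity condition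
`⟨ψ, [L_μ, L_ν] ψ⟩ = 0` holds for every `ψ` in the support `span{φ_1, …, φ_r}` of `ρ`. -/
theorem curvMeasure_zero_iff_PCC {d n r : ℕ}
    (lam : Fin r → ℝ) (hlam : ∀ ℓ, 0 < lam ℓ)
    (φ : Fin r → (Fin n → ℂ))
    (hortho : ∀ k l, star (φ k) ⬝ᵥ φ l = if k = l then (1 : ℂ) else 0)
    (ρ : Matrix (Fin n) (Fin n) ℂ)
    (hρ : ρ = ∑ ℓ : Fin r, ((lam ℓ : ℝ) : ℂ) • Matrix.vecMulVec (φ ℓ) (star (φ ℓ)))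
    (G : Fin d → Matrix (Fin n) (Fin n) ℂ) (hG : ∀ μ, (G μ).IsHermitian)
    (g : Matrix (Fin d) (Fin d) ℝ) (hgsymm : g.IsSymm) (hgpos : g.PosDef)
    (L : Fin d → Matrix (Fin n) (Fin n) ℂ) (hL : ∀ μ, L μ = (2 : ℂ) • G μ) :
    (-∑ μ : Fin d, ∑ ν : Fin d, ∑ α : Fin d, ∑ β : Fin d,
        ((g⁻¹ μ α : ℝ) : ℂ) * ((g⁻¹ ν β : ℝ) : ℂ) *
          ∑ ℓ : Fin r, ∑ m : Fin r,
            ((lam ℓ * lam m / (lam ℓ + lam m) ^ 2 : ℝ) : ℂ) *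
              (star (φ ℓ) ⬝ᵥ (G μ * G ν - G ν * G μ).mulVec (φ m)) *
              (star (φ m) ⬝ᵥ (G α * G β - G β * G α).mulVec (φ ℓ)) = 0)
    ↔ ∀ ψ ∈ Submodule.span ℂ (Set.range φ), ∀ μ ν : Fin d,
        star ψ ⬝ᵥ (L μ * L ν - L ν * L μ).mulVec ψ = 0 :=
  curvMeasure_zero_iff_PCC_general lam hlam φ G hG g hgpos L hL
end

section
/- Let ψ ∈ ℂⁿ be a unit vector and let G₁, G₂ ∈ Matrix (Fin n) (Fin n) ℂ be Hermitian. Define the Bures metric tensor g_{μν} := Re⟨ψ, G_μ G_ν ψ⟩ for μ, ν ∈ {1,2}, and assume g is positive definite; let g^{μν} be the entries of its inverse and define G^μ := Σ_α g^{μα} G_α. Define the curvature measure 𝒞 := Σ_{μ,ν=1}^2 Im⟨ψ, G_μ G_ν ψ⟩ · Im⟨ψ, G^μ G^ν ψ⟩ and the incompatibility factor γ := |Im⟨ψ, G₁ G₂ ψ⟩|² / det g. Then 𝒞 = 2γ; in particular each summand Im⟨ψ, G_μ G_ν ψ⟩ · Im⟨ψ, G^μ G^ν ψ⟩ is nonnegative.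 -/
/-!
`Im⟨ψ, A B ψ⟩` is real bilinear and, for Hermitian `A, B`, antisymmetric in `(A, B)`. On a
two-parameter model every antisymmetric form is a multiple of the Levi-Civita symbol, so raising
both indices with `g⁻¹` multiplies its `(0, 1)` component by `det g⁻¹ = 1 / det g`. Each
off-diagonal summand of `𝒞` is therefore `Im⟨ψ, G₀ G₁ ψ⟩² / det g`, each diagonal one vanishes.
-/

open Matrix

section Antisymmetric

variable {R : Type*} [CommRing R] [NoZeroDivisors R] [CharZero R]

theorem eq_zero_of_antisymm_diag {ι : Type*} {ω : ι → ι → R} (hω : ∀ α β, ω β α = -ω α β)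
    (α : ι) : ω α α = 0 :=
  self_eq_neg.mp (hω α α)

theorem Fin.sum_sum_mul_of_antisymm {ω : Fin 2 → Fin 2 → R} (hω : ∀ α β, ω β α = -ω α β)
    (a b : Fin 2 → R) :
    ∑ α, ∑ β, a α * b β * ω α β = (a 0 * b 1 - a 1 * b 0) * ω 0 1 := by
  simp only [Fin.sum_univ_two, eq_zero_of_antisymm_diag hω, hω 1 0]
  ring

theorem Fin.antisymm_mul_antisymm {ω ω' : Fin 2 → Fin 2 → R} (hω : ∀ α β, ω β α = -ω α β)
    (hω' : ∀ α β, ω' β α = -ω' α β) (μ ν : Fin 2) :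
    ω μ ν * ω' μ ν = if μ = ν then 0 else ω 0 1 * ω' 0 1 := by
  fin_cases μ <;> fin_cases ν <;>
    simp [eq_zero_of_antisymm_diag hω, eq_zero_of_antisymm_diag hω', hω 1 0, hω' 1 0]

end Antisymmetric

section Expectation

variable {m : Type*} [Fintype m]

theorem star_dotProduct_mul_mulVec_swap {A B : Matrix m m ℂ} (hA : A.IsHermitian)
    (hB : B.IsHermitian) (ψ : m → ℂ) :
    star ψ ⬝ᵥ (B * A) *ᵥ ψ = star (star ψ ⬝ᵥ (A * B) *ᵥ ψ) := by
  rw [star_dotProduct, star_mulVec, conjTranspose_mul, hA.eq, hB.eq, ← dotProduct_mulVec]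

theorem im_dotProduct_mul_mulVec_swap {A B : Matrix m m ℂ} (hA : A.IsHermitian)
    (hB : B.IsHermitian) (ψ : m → ℂ) :
    (star ψ ⬝ᵥ (B * A) *ᵥ ψ).im = -(star ψ ⬝ᵥ (A * B) *ᵥ ψ).im := by
  rw [star_dotProduct_mul_mulVec_swap hA hB, Complex.star_def, Complex.conj_im]

theorem im_dotProduct_sum_smul_mul_sum_smul {ι : Type*} [Fintype ι] (ψ : m → ℂ)
    (G : ι → Matrix m m ℂ) (a b : ι → ℝ) :
    (star ψ ⬝ᵥ ((∑ α, (a α : ℂ) • G α) * ∑ β, (b β : ℂ) • G β) *ᵥ ψ).im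
      = ∑ α, ∑ β, a α * b β * (star ψ ⬝ᵥ (G α * G β) *ᵥ ψ).im := by
  rw [Finset.sum_mul_sum]
  simp only [smul_mul_smul_comm, sum_mulVec, smul_mulVec,
    dotProduct_sum, dotProduct_smul, smul_eq_mul, Complex.im_sum, ← Complex.ofReal_mul,
    Complex.im_ofReal_mul]

end Expectation

theorem pure_state_curvature_eq_twice_incompatibility_general {n : ℕ}
    (ψ : Fin n → ℂ)
    (G : Fin 2 → Matrix (Fin n) (Fin n) ℂ) (hG : ∀ μ, (G μ).IsHermitian)
    (g : Matrix (Fin 2) (Fin 2) ℝ)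
    (hgpos : g.PosDef)
    (Gup : Fin 2 → Matrix (Fin n) (Fin n) ℂ)
    (hGup : ∀ μ, Gup μ = ∑ α : Fin 2, ((g⁻¹ μ α : ℝ) : ℂ) • G α) :
    (∑ μ : Fin 2, ∑ ν : Fin 2,
        (star ψ ⬝ᵥ (G μ * G ν).mulVec ψ).im * (star ψ ⬝ᵥ (Gup μ * Gup ν).mulVec ψ).im)
      = 2 * ((star ψ ⬝ᵥ (G 0 * G 1).mulVec ψ).im ^ 2 / g.det)
    ∧ ∀ μ ν : Fin 2,
        0 ≤ (star ψ ⬝ᵥ (G μ * G ν).mulVec ψ).im * (star ψ ⬝ᵥ (Gup μ * Gup ν).mulVec ψ).im := by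
  set ω : Fin 2 → Fin 2 → ℝ := fun μ ν => (star ψ ⬝ᵥ (G μ * G ν) *ᵥ ψ).im
  have hω : ∀ μ ν, ω ν μ = -ω μ ν := fun μ ν => im_dotProduct_mul_mulVec_swap (hG μ) (hG ν) ψ
  set ωup : Fin 2 → Fin 2 → ℝ := fun μ ν => (g⁻¹ μ 0 * g⁻¹ ν 1 - g⁻¹ μ 1 * g⁻¹ ν 0) * ω 0 1
  have hup : ∀ μ ν, (star ψ ⬝ᵥ (Gup μ * Gup ν) *ᵥ ψ).im = ωup μ ν := fun μ ν => by
    rw [hGup, hGup, im_dotProduct_sum_smul_mul_sum_smul, Fin.sum_sum_mul_of_antisymm hω]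
  have hωup : ∀ μ ν, ωup ν μ = -ωup μ ν := fun μ ν => by ring
  have hωup01 : ωup 0 1 = ω 0 1 / g.det := by
    rw [div_eq_inv_mul, ← Ring.inverse_eq_inv', ← det_nonsing_inv, det_fin_two]
  have hsummand : ∀ μ ν, ω μ ν * ωup μ ν = if μ = ν then 0 else ω 0 1 ^ 2 / g.det :=
    fun μ ν => by rw [Fin.antisymm_mul_antisymm hω hωup, hωup01, mul_div_assoc', ← sq]
  simp only [hup]
  change ∑ μ, ∑ ν, ω μ ν * ωup μ ν = 2 * (ω 0 1 ^ 2 / g.det) ∧ ∀ μ ν, 0 ≤ ω μ ν * ωup μ ν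
  simp only [hsummand]
  refine ⟨by
    simp only [Fin.sum_univ_two, Fin.isValue, ↓reduceIte, zero_ne_one, one_ne_zero]; ring, fun μ ν => ?_⟩
  have hdet := hgpos.det_pos
  split_ifs <;> positivity

/-- Theorem 3 of the paper. For a two-parameter pure-state model with unit
vector `ψ` and Hermitian `G₁, G₂`, with Bures metric `g_{μν} = Re⟨ψ, G_μ G_ν ψ⟩` assumed
positive definite and raised indices `G^μ = Σ_α g^{μα} G_α`, the curvature measure
`𝒞 = Σ_{μν} Im⟨ψ, G_μ G_ν ψ⟩ · Im⟨ψ, G^μ G^ν ψ⟩` equals twice the incompatibility factor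
`γ = |Im⟨ψ, G₁ G₂ ψ⟩|² / det g`; in particular each summand is nonnegative. -/
theorem pure_state_curvature_eq_twice_incompatibility {n : ℕ}
    (ψ : Fin n → ℂ) (hψ : star ψ ⬝ᵥ ψ = 1)
    (G : Fin 2 → Matrix (Fin n) (Fin n) ℂ) (hG : ∀ μ, (G μ).IsHermitian)
    (g : Matrix (Fin 2) (Fin 2) ℝ)
    (hg : g = Matrix.of fun μ ν => (star ψ ⬝ᵥ (G μ * G ν).mulVec ψ).re)
    (hgpos : g.PosDef)
    (Gup : Fin 2 → Matrix (Fin n) (Fin n) ℂ)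
    (hGup : ∀ μ, Gup μ = ∑ α : Fin 2, ((g⁻¹ μ α : ℝ) : ℂ) • G α) :
    (∑ μ : Fin 2, ∑ ν : Fin 2,
        (star ψ ⬝ᵥ (G μ * G ν).mulVec ψ).im * (star ψ ⬝ᵥ (Gup μ * Gup ν).mulVec ψ).im)
      = 2 * ((star ψ ⬝ᵥ (G 0 * G 1).mulVec ψ).im ^ 2 / g.det)
    ∧ ∀ μ ν : Fin 2,
        0 ≤ (star ψ ⬝ᵥ (G μ * G ν).mulVec ψ).im * (star ψ ⬝ᵥ (Gup μ * Gup ν).mulVec ψ).im :=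
  pure_state_curvature_eq_twice_incompatibility_general ψ G hG g hgpos Gup hGup
end

section
/- For real parameters a and b with b > 0, define G₁(a,b) := (1/2)[[0, −i e^{−b−ia}],[i e^{−b+ia}, 0]] and G₂(a,b) := (1/(2(e^{2b}−1)))[[1, −e^{b−ia}],[−e^{b+ia}, 1]]. Then the dual curvature component F̃₁₂ := ∂G₂/∂a − ∂G₁/∂b − [G₁, G₂] equals (−i/(2(e^{2b}−1))) [[1, −e^{−b−ia}],[e^{−b+ia}, −1]] for all (a,b) with b > 0. -/
open Matrix Complex

/-- The component `G₁` of the Hermitian 1-form for the parameter `a` in the qubit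
phase/phase-diffusion model. -/
noncomputable def G1AB (a b : ℝ) : Matrix (Fin 2) (Fin 2) ℂ :=
  (1/2 : ℂ) • !![0, -Complex.I * Complex.exp (-(b : ℂ) - Complex.I * a);
                 Complex.I * Complex.exp (-(b : ℂ) + Complex.I * a), 0]

/-- The component `G₂` of the Hermitian 1-form for the parameter `b` in the qubit
phase/phase-diffusion model. -/
noncomputable def G2AB (a b : ℝ) : Matrix (Fin 2) (Fin 2) ℂ :=
  (1 / (2 * (Complex.exp (2 * (b : ℂ)) - 1))) •
    !![1, -Complex.exp ((b : ℂ) - Complex.I * a);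
       -Complex.exp ((b : ℂ) + Complex.I * a), 1]

/-- Entrywise partial derivative with respect to the first parameter `a`. -/
noncomputable def pderivA (f : ℝ → ℝ → Matrix (Fin 2) (Fin 2) ℂ) (a b : ℝ) :
    Matrix (Fin 2) (Fin 2) ℂ :=
  Matrix.of fun i j => deriv (fun t : ℝ => f t b i j) a

/-- Entrywise partial derivative with respect to the second parameter `b`. -/
noncomputable def pderivB (f : ℝ → ℝ → Matrix (Fin 2) (Fin 2) ℂ) (a b : ℝ) :
    Matrix (Fin 2) (Fin 2) ℂ :=
  Matrix.of fun i j => deriv (fun t : ℝ => f a t i j) b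

/-!
`G₁` carries the factor `e^{-b}`, so `∂G₁/∂b = -G₁`, while `∂G₂/∂a` only differentiates the
phases `e^{∓ia}`. In `G₁G₂` and `G₂G₁` the off-diagonal phases `e^{∓(b+ia)} e^{±(b+ia)}` cancel,
so the commutator is diagonal, `[G₁, G₂] = (i / (2(e^{2b} - 1))) diag(1, -1)`. The off-diagonal
entries of `F̃₁₂` then follow from `e^{2b} / (2(e^{2b} - 1)) - 1/2 = 1 / (2(e^{2b} - 1))`.
-/

section PartialDerivatives

variable {f : ℝ → ℝ → Matrix (Fin 2) (Fin 2) ℂ} {M : Matrix (Fin 2) (Fin 2) ℂ} {a b : ℝ}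

theorem pderivA_eq_of_hasDerivAt (h : ∀ i j, HasDerivAt (fun t => f t b i j) (M i j) a) :
    pderivA f a b = M := by
  ext i j
  exact (h i j).deriv

theorem pderivB_eq_of_hasDerivAt (h : ∀ i j, HasDerivAt (fun t => f a t i j) (M i j) b) :
    pderivB f a b = M := by
  ext i j
  exact (h i j).deriv

end PartialDerivatives

theorem hasDerivAt_cexp_ofReal_mul_add (s w : ℂ) (x : ℝ) :
    HasDerivAt (fun t : ℝ => exp (s * t + w)) (exp (s * x + w) * s) x := by
  simpa using (((hasDerivAt_id (x : ℂ)).const_mul s).add_const w).cexp.comp_ofReal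

theorem pderivB_G1AB (a b : ℝ) : pderivB G1AB a b = -G1AB a b := by
  refine pderivB_eq_of_hasDerivAt fun i j => ?_
  fin_cases i <;> fin_cases j <;>
    simp only [G1AB, Fin.zero_eta, Fin.mk_one, Fin.isValue, Matrix.neg_apply, Matrix.smul_apply,
      of_apply, cons_val', cons_val_zero, cons_val_one, cons_val_fin_one, smul_eq_mul, mul_zero,
      neg_zero]
  · exact hasDerivAt_const b (0 : ℂ)
  · have h := (hasDerivAt_cexp_ofReal_mul_add (-1) (-I * a) b).const_mul (-I / 2)
    ring_nf at h ⊢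
    exact h
  · have h := (hasDerivAt_cexp_ofReal_mul_add (-1) (I * a) b).const_mul (I / 2)
    ring_nf at h ⊢
    exact h
  · exact hasDerivAt_const b (0 : ℂ)

theorem pderivA_G2AB (a b : ℝ) :
    pderivA G2AB a b = (1 / (2 * (exp (2 * (b : ℂ)) - 1))) •
      !![0, I * exp ((b : ℂ) - I * a); -I * exp ((b : ℂ) + I * a), 0] := by
  refine pderivA_eq_of_hasDerivAt fun i j => ?_
  simp only [G2AB]
  generalize 1 / (2 * (exp (2 * (b : ℂ)) - 1)) = c
  fin_cases i <;> fin_cases j <;>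
    simp only [Fin.zero_eta, Fin.mk_one, Fin.isValue, Matrix.smul_apply, of_apply, cons_val',
      cons_val_zero, cons_val_one, cons_val_fin_one, smul_eq_mul, mul_zero, mul_one]
  · exact hasDerivAt_const a c
  · have h := (hasDerivAt_cexp_ofReal_mul_add (-I) b a).const_mul (-c)
    ring_nf at h ⊢
    exact h
  · have h := (hasDerivAt_cexp_ofReal_mul_add I b a).const_mul (-c)
    ring_nf at h ⊢
    exact h
  · exact hasDerivAt_const a c

theorem exp_two_mul_ofReal_sub_one_ne_zero {b : ℝ} (hb : b ≠ 0) :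
    exp (2 * (b : ℂ)) - 1 ≠ 0 := by
  rw [sub_ne_zero, ← ofReal_ofNat, ← ofReal_mul, ← ofReal_exp, ← ofReal_one, Ne, ofReal_inj,
    Real.exp_eq_one_iff]
  positivity

theorem G1AB_mul_G2AB_sub_G2AB_mul_G1AB (a b : ℝ) :
    G1AB a b * G2AB a b - G2AB a b * G1AB a b
      = (I / (2 * (exp (2 * (b : ℂ)) - 1))) • !![1, 0; 0, -1] := by
  ext i j
  fin_cases i <;> fin_cases j <;> simp [G1AB, G2AB, exp_add, exp_sub, exp_neg] <;> field_simp <;>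
    ring

/-- For the qubit phase/phase-diffusion model with `b > 0`, the dual
curvature component `F̃₁₂ = ∂G₂/∂a − ∂G₁/∂b − [G₁, G₂]` equals
`(−i/(2(e^{2b} − 1))) [[1, −e^{−b−ia}], [e^{−b+ia}, −1]]`. -/
theorem qubit_model_dual_curvature (a b : ℝ) (hb : 0 < b) :
    pderivA G2AB a b - pderivB G1AB a b
      - (G1AB a b * G2AB a b - G2AB a b * G1AB a b)
    = (-Complex.I / (2 * (Complex.exp (2 * (b : ℂ)) - 1))) •
        !![1, -Complex.exp (-(b : ℂ) - Complex.I * a);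
           Complex.exp (-(b : ℂ) + Complex.I * a), -1] := by
  have hden := exp_two_mul_ofReal_sub_one_ne_zero hb.ne'
  have hsq : exp (2 * (b : ℂ)) = exp b ^ 2 := by rw [← exp_nat_mul]; norm_num
  rw [hsq] at hden
  rw [pderivA_G2AB, pderivB_G1AB, G1AB_mul_G2AB_sub_G2AB_mul_G1AB, sub_neg_eq_add]
  ext i j
  fin_cases i <;> fin_cases j <;> simp [G1AB, exp_add, exp_sub, exp_neg, hsq] <;> field_simp <;>
    ring
end
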